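/- First local preference property (exchange of continuations) for ordered Büchi languages: let A = (Q, ≤, I, Γ) be an ordered Büchi automaton with language L. For all finite tile words u, u' and infinite tile words w, w' over Γ, if uw ∈ L and u'w' ∈ L, then uw' ∈ L or u'w ∈ L. -/

import Mathlib

variable {Q : Type*} [Fintype Q] [LinearOrder Q]

/-- A Büchi transition: (source, priority, target), priority 0 = Büchi. -/
abbrev BTrans (Q : Type*) := Q × Fin 2 × Q

/-- The order ⊑ on transitions. -/
def TransLE (d d' : BTrans Q) : Prop :=
  d.1 ≤ d'.1 ∧ d'.2.2 ≤ d.2.2 ∧ (d.1 = d'.1 → d.2.2 = d'.2.2 → d.2.1 ≤ d'.2.1)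

/-- A tile is upward-closed for ⊑. -/
def UpClosed (t : Set (BTrans Q)) : Prop := ∀ d ∈ t, ∀ d', TransLE d d' → d' ∈ t

/-- Upward closure of a tile. -/
def upclos (s : Set (BTrans Q)) : Set (BTrans Q) := {d' | ∃ d ∈ s, TransLE d d'}

/-- The tile product. -/
def tmul (t₁ t₂ : Set (BTrans Q)) : Set (BTrans Q) :=
  {x | ∃ p q r c₁ c₂, (p, c₁, q) ∈ t₁ ∧ (q, c₂, r) ∈ t₂ ∧ x = (p, min c₁ c₂, r)}

/-- Downwards-closed subset of states. -/
def DownClosed (U : Set Q) : Prop := ∀ q ∈ U, ∀ q', q' ≤ q → q' ∈ U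

/-- Acceptance of an infinite tile word from initial set I: there is a run
seeing priority 0 infinitely often. -/
def InfAccept (I : Set Q) (w : ℕ → Set (BTrans Q)) : Prop :=
  ∃ (ρ : ℕ → Q) (c : ℕ → Fin 2), ρ 0 ∈ I ∧ (∀ j, (ρ j, c j, ρ (j + 1)) ∈ w j) ∧
    ∀ N, ∃ j ≥ N, c j = 0

/-- Concatenation of a finite tile word with an infinite tile word. -/
def wcat (u : List (Set (BTrans Q))) (w : ℕ → Set (BTrans Q)) : ℕ → Set (BTrans Q) :=
  fun j => if j < u.length then u.getD j ∅ else w (j - u.length)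

/-- Infinite repetition v^ω of a finite tile word. -/
def wpow (v : List (Set (BTrans Q))) : ℕ → Set (BTrans Q) :=
  fun j => v.getD (j % v.length) ∅

/-- q is reachable from I by a partial run over the finite tile word u. -/
def Reach (I : Set Q) (u : List (Set (BTrans Q))) (q : Q) : Prop :=
  ∃ (ρ : ℕ → Q) (c : ℕ → Fin 2), ρ 0 ∈ I ∧
    (∀ i < u.length, (ρ i, c i, ρ (i + 1)) ∈ u.getD i ∅) ∧ ρ u.length = q

/-!
An accepting run of `u w` splits at position `|u|` into a partial run reaching some state `q` and
an accepting run of `w` from `q`. Given such states `q` for `u w` and `q'` for `u' w'`, say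
`q' ≤ q`, the run of `w'` from `q'` can be restarted at `q`, because its first transition stays in
the upward-closed tile `w' 0` when its source is raised; grafting it after `u` accepts `u w'`.
-/

section

variable {Q : Type*}

@[simp]
lemma wcat_of_lt {u : List (Set (BTrans Q))} {w : ℕ → Set (BTrans Q)} {j : ℕ}
    (hj : j < u.length) : wcat u w j = u.getD j ∅ := if_pos hj

@[simp]
lemma wcat_add_length (u : List (Set (BTrans Q))) (w : ℕ → Set (BTrans Q)) (j : ℕ) :
    wcat u w (j + u.length) = w j := by
  simp [wcat]

lemma InfAccept.exists_reach_of_wcat {I : Set Q} {u : List (Set (BTrans Q))}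
    {w : ℕ → Set (BTrans Q)} (h : InfAccept I (wcat u w)) :
    ∃ q, Reach I u q ∧ InfAccept {q} w := by
  obtain ⟨ρ, c, h0, hrun, hbuchi⟩ := h
  refine ⟨ρ u.length, ⟨ρ, c, h0, fun i hi => ?_, rfl⟩,
    ⟨fun j => ρ (j + u.length), fun j => c (j + u.length), by simp, fun j => ?_, fun N => ?_⟩⟩
  · simpa [hi] using hrun i
  · simpa [Nat.add_right_comm] using hrun (j + u.length)
  · obtain ⟨j, hj, hc⟩ := hbuchi (N + u.length)
    exact ⟨j - u.length, by omega, show c (j - u.length + u.length) = 0 by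
      rwa [Nat.sub_add_cancel (by omega)]⟩

lemma InfAccept.wcat_of_reach {I : Set Q} {u : List (Set (BTrans Q))}
    {w : ℕ → Set (BTrans Q)} {q : Q} (hu : Reach I u q) (hw : InfAccept {q} w) :
    InfAccept I (wcat u w) := by
  obtain ⟨ρ₁, c₁, h0, hrun₁, rfl⟩ := hu
  obtain ⟨ρ₂, c₂, hq, hrun₂, hbuchi⟩ := hw
  set ρ := fun j => if j < u.length then ρ₁ j else ρ₂ (j - u.length)
  have hρ₁ : ∀ j ≤ u.length, ρ j = ρ₁ j := by
    intro j hj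
    rcases hj.lt_or_eq with hj | rfl
    · simp [ρ, hj]
    · simpa [ρ] using hq
  have hρ₂ : ∀ k, ρ (k + u.length) = ρ₂ k := by simp [ρ]
  refine ⟨ρ, fun j => if j < u.length then c₁ j else c₂ (j - u.length),
    by rwa [hρ₁ 0 (Nat.zero_le _)], fun j => ?_, fun N => ?_⟩
  · rcases lt_or_ge j u.length with hj | hj
    · simpa [hj, hρ₁ j hj.le, hρ₁ (j + 1) hj] using hrun₁ j hj
    · obtain ⟨k, rfl⟩ := Nat.exists_eq_add_of_le' hj
      simpa [Nat.add_right_comm k u.length 1, hρ₂] using hrun₂ k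
  · obtain ⟨j, hj, hc⟩ := hbuchi N
    exact ⟨j + u.length, by omega, by simpa using hc⟩

lemma InfAccept.of_singleton_le [LinearOrder Q] {w : ℕ → Set (BTrans Q)} {p q : Q}
    (hw : UpClosed (w 0)) (hpq : p ≤ q) (h : InfAccept {p} w) : InfAccept {q} w := by
  obtain ⟨ρ, c, rfl, hrun, hbuchi⟩ := h
  refine ⟨Function.update ρ 0 q, c, by simp, fun j => ?_, hbuchi⟩
  cases j with
  | zero => exact hw _ (hrun 0) _ ⟨hpq, le_rfl, fun _ _ => le_rfl⟩
  | succ j => simpa using hrun (j + 1)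

end

theorem first_local_preference_general (Q : Type*) [LinearOrder Q]
    (Γ : Set (Set (BTrans Q))) (hΓ : ∀ t ∈ Γ, UpClosed t)
    (I : Set Q)
    (u u' : List (Set (BTrans Q))) (w w' : ℕ → Set (BTrans Q))
    (hw : ∀ j, w j ∈ Γ) (hw' : ∀ j, w' j ∈ Γ)
    (h1 : InfAccept I (wcat u w)) (h2 : InfAccept I (wcat u' w')) :
    InfAccept I (wcat u w') ∨ InfAccept I (wcat u' w) := by
  obtain ⟨q, hq, hqw⟩ := h1.exists_reach_of_wcat
  obtain ⟨q', hq', hqw'⟩ := h2.exists_reach_of_wcat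
  rcases le_total q' q with hle | hle
  · exact .inl (.wcat_of_reach hq (hqw'.of_singleton_le (hΓ _ (hw' 0)) hle))
  · exact .inr (.wcat_of_reach hq' (hqw.of_singleton_le (hΓ _ (hw 0)) hle))

theorem first_local_preference (Q : Type*) [Fintype Q] [LinearOrder Q]
    (Γ : Set (Set (BTrans Q))) (hΓ : ∀ t ∈ Γ, UpClosed t)
    (I : Set Q) (hI : DownClosed I)
    (u u' : List (Set (BTrans Q))) (w w' : ℕ → Set (BTrans Q))
    (hu : ∀ t ∈ u, t ∈ Γ) (hu' : ∀ t ∈ u', t ∈ Γ)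
    (hw : ∀ j, w j ∈ Γ) (hw' : ∀ j, w' j ∈ Γ)
    (h1 : InfAccept I (wcat u w)) (h2 : InfAccept I (wcat u' w')) :
    InfAccept I (wcat u w') ∨ InfAccept I (wcat u' w) :=
  first_local_preference_general Q Γ hΓ I u u' w w' hw hw' h1 h2
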